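/- For any point y = φ(z) ∈ Y, the descended Schur correspondence satisfies S̄_λ(y) = |H|² · Σ_{i=1}^{d} (λg_i, λ) · φ(z^{g_i^{-1}}), where {g_1 = 1, g_2, …, g_d} is any set of representatives for the right cosets of H in W; in particular the right-hand side is independent of the choice of z in the fibre over y and of the choice of representatives. -/
import Mathlib


/-!
STATEMENT 9 (Proposition 3.1).
`W` is a Weyl group acting on the right (via `act`) on a smooth projective curve `Z`
with quotient the Galois covering `pX : Z → X`.  `V = S_ω ⊗ ℚ` is the irreducible
rational `W`-representation containing the `W`-lattice `Sω`, with the unique minimal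
integer-valued negative definite `W`-invariant symmetric form `B`.  `lam` is a weight
(`lam·g - lam ∈ Sω` for all `g`), `H = Stab(lam)`, `Y = Z/H` with quotient maps
`pY : Z → Y` and `pYX : Y → X`.  The Schur correspondence `S_λ = Σ_g (λg,λ)·Γ_g`
descends to `S̄_λ = (pY×pY)_* S_λ` on `Y`; as a map `Y → Div_ℚ(Y)` it is given by
`S̄_λ(pY z) = Σ_{h∈H} Σ_{g∈W} (λg,λ)·[pY (z^{hg})]` (hypothesis `hSb`).
Claim: for any `y = pY z` and any set `{g_1,…,g_d}` of representatives of the right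
cosets of `H` in `W`, `S̄_λ(y) = |H|² Σ_i (λ g_i, λ) · [pY (z^{g_i⁻¹})]`; in particular
the right-hand side depends neither on `z` in the fibre over `y` nor on the choice of
representatives.
-/
theorem stmt_9
    {W : Type*} [Group W] [Fintype W]
    {V : Type*} [AddCommGroup V] [Module ℚ V]
    -- the right action of W on V
    (ract : W → V →ₗ[ℚ] V)
    (hract_one : ract 1 = LinearMap.id)
    (hract_mul : ∀ g h : W, ract (g * h) = (ract h).comp (ract g))
    -- the W-invariant negative definite symmetric form ( , )
    (B : V →ₗ[ℚ] V →ₗ[ℚ] ℚ)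
    (hBsymm : ∀ x y : V, B x y = B y x)
    (hBinv : ∀ (g : W) (x y : V), B (ract g x) (ract g y) = B x y)
    (hBneg : ∀ x : V, x ≠ 0 → B x x < 0)
    -- the lattice Sω and the weight lam
    (Sω : AddSubgroup V)
    (hSω_stable : ∀ (g : W), ∀ x ∈ Sω, ract g x ∈ Sω)
    (lam : V)
    (hlam_weight : ∀ g : W, ract g lam - lam ∈ Sω)
    (hBint : ∀ μ ∈ Sω, ∃ k : ℤ, B lam μ = (k : ℚ))
    -- H = Stab(lam)
    (H : Subgroup W) [DecidablePred (· ∈ H)]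
    (hH : ∀ g : W, g ∈ H ↔ ract g lam = lam)
    -- the curves and the covering maps
    {Z Y X : Type*}
    (act : Z → W → Z)
    (hact_one : ∀ z, act z 1 = z)
    (hact_mul : ∀ z g h, act (act z g) h = act z (g * h))
    (pX : Z → X) (pY : Z → Y) (pYX : Y → X)
    (hpX_surj : Function.Surjective pX)
    (hpX_fib : ∀ z z' : Z, pX z = pX z' ↔ ∃ g : W, act z g = z')
    (hpY_surj : Function.Surjective pY)
    (hpY_fib : ∀ z z' : Z, pY z = pY z' ↔ ∃ h ∈ H, act z h = z')
    (hcomm : ∀ z, pYX (pY z) = pX z)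
    -- the descended Schur correspondence S̄_λ = (pY×pY)_* S_λ as a map Y → Div_ℚ(Y)
    (Sb : Y → (Y →₀ ℚ))
    (hSb : ∀ z : Z, Sb (pY z) =
      ∑ h : H, ∑ g : W,
        Finsupp.single (pY (act z ((h : W) * g))) (B (ract g lam) lam)) :
    ∀ (d : ℕ) (gs : Fin d → W),
      -- {gs i} is a set of representatives of the right cosets of H in W
      (∀ w : W, ∃! i : Fin d, ∃ h ∈ H, w = h * gs i) →
      ∀ z : Z,
        Sb (pY z) = ∑ i : Fin d,
          Finsupp.single (pY (act z (gs i)⁻¹))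
            ((Nat.card H : ℚ) ^ 2 * B (ract (gs i) lam) lam) := by
  intro d gs hreps z
  have hfix : ∀ h : W, h ∈ H → ract h lam = lam := fun h hh => (hH h).1 hh
  have hract_apply : ∀ g h : W, ∀ v, ract (g * h) v = ract h (ract g v) := by
    intro g h v; rw [hract_mul]; rfl
  have hcoeff : ∀ (h g : W), h ∈ H → B (ract (h * g) lam) lam = B (ract g lam) lam := by
    intro h g hh; rw [hract_apply, hfix h hh]
  have hinv : ∀ g : W, B (ract g⁻¹ lam) lam = B (ract g lam) lam := by
    intro g
    have h1 := hBinv g (ract g⁻¹ lam) lam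
    rw [← hract_apply, inv_mul_cancel, hract_one] at h1
    simp only [LinearMap.id_coe, id_eq] at h1
    rw [← h1, hBsymm]
  have hpt : ∀ (w h : W), h ∈ H → pY (act z (w * h)) = pY (act z w) := by
    intro w h hh
    symm
    rw [hpY_fib]
    exact ⟨h, hh, by rw [hact_mul]⟩
  set c : W → ℚ := fun g => B (ract g lam) lam with hc
  set F : W → (Y →₀ ℚ) := fun g => Finsupp.single (pY (act z g⁻¹)) (c g) with hF
  have step1 : Sb (pY z) = Fintype.card H • ∑ g : W, F g := by
    rw [hSb z]
    have hinner : ∀ h : H,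
        (∑ g : W, Finsupp.single (pY (act z ((h : W) * g))) (B (ract g lam) lam))
          = ∑ g : W, F g := by
      intro h
      refine Fintype.sum_equiv ((Equiv.mulLeft (h : W)).trans (Equiv.inv W)) _ _ ?_
      intro g
      show Finsupp.single (pY (act z ((h : W) * g))) (B (ract g lam) lam)
          = F (((h : W) * g)⁻¹)
      simp only [hF, hc, inv_inv]
      rw [hinv ((h : W) * g), hcoeff (h : W) g h.2]
    rw [Finset.sum_congr rfl (fun h _ => hinner h), Finset.sum_const,
      Finset.card_univ]
  have hbij : Function.Bijective (fun p : Fin d × H => (p.2 : W) * gs p.1) := by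
    constructor
    · rintro ⟨i, h⟩ ⟨i', h'⟩ heq
      simp only at heq
      obtain ⟨j, hj, hju⟩ := hreps ((h : W) * gs i)
      have hi : i = i' :=
        (hju i ⟨h, h.2, rfl⟩).trans (hju i' ⟨h', h'.2, heq⟩).symm
      subst hi
      have : (h : W) = h' := mul_right_cancel heq
      exact Prod.ext rfl (Subtype.ext this)
    · intro w
      obtain ⟨i, ⟨h, hh, hw⟩, _⟩ := hreps w
      exact ⟨(i, ⟨h, hh⟩), hw.symm⟩
  have step2 : (∑ g : W, F g)
      = ∑ i : Fin d, Fintype.card H •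
          Finsupp.single (pY (act z (gs i)⁻¹)) (c (gs i)) := by
    rw [← Fintype.sum_bijective _ hbij _ F (fun p => rfl)]
    rw [Fintype.sum_prod_type]
    refine Finset.sum_congr rfl ?_
    intro i _
    have hterm : ∀ h : H, F ((h : W) * gs i)
        = Finsupp.single (pY (act z (gs i)⁻¹)) (c (gs i)) := by
      intro h
      simp only [hF]
      rw [mul_inv_rev]
      rw [hpt (gs i)⁻¹ (h : W)⁻¹ (H.inv_mem h.2)]
      congr 1
      simp only [hc]
      exact hcoeff (h : W) (gs i) h.2
    rw [Finset.sum_congr rfl (fun h _ => hterm h), Finset.sum_const,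
      Finset.card_univ]
  rw [step1, step2, Finset.smul_sum]
  refine Finset.sum_congr rfl ?_
  intro i _
  rw [smul_smul, Finsupp.smul_single, Nat.card_eq_fintype_card]
  congr 1
  push_cast
  ring
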